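/- If G is a connected 2-γ'_MB-critical graph with n vertices, then the maximum degree of G is at most n − 2; in particular G has no vertex adjacent to all other vertices. -/
import Mathlib


/-!
Maker–Breaker domination game.  The players Dominator and Staller alternately select
previously unselected vertices of a graph `G`.  Dominator wins if at some point his selected
vertices form a dominating set of `G`; Staller wins if she selects all vertices of the closed
neighbourhood of some vertex.  Below, `D` always denotes the set of vertices selected by
Dominator so far and `S` the set selected by Staller.
-/

namespace MBD

variable {V : Type*}

/-- `D` is a dominating set of `G`. -/
def IsDomSet (G : SimpleGraph V) (D : Set V) : Prop :=
  ∀ v, v ∈ D ∨ ∃ u ∈ D, G.Adj u v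

/-- Dominator is to move.  `DWin G k D S` says that Dominator has a strategy guaranteeing
that his selected set becomes a dominating set of `G` after at most `k` further moves of his
(the game ends when all vertices have been selected). -/
def DWin (G : SimpleGraph V) : ℕ → Set V → Set V → Prop
  | 0, D, _ => IsDomSet G D
  | (k+1), D, S => IsDomSet G D ∨
      ∃ v ∉ D ∪ S,
        (IsDomSet G (insert v D) ∨
          ((∃ w, w ∉ insert v D ∪ S) ∧
            ∀ w ∉ insert v D ∪ S, DWin G k (insert v D) (insert w S)))

/-- Staller is to move, and Dominator can win using at most `k` further moves of his. -/
def DWinS (G : SimpleGraph V) (k : ℕ) (D S : Set V) : Prop :=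
  IsDomSet G D ∨
    ((∃ w, w ∉ D ∪ S) ∧ ∀ w ∉ D ∪ S, DWin G k D (insert w S))

/-- The Maker–Breaker domination number `γ_MB` of `G`: the least `k` such that Dominator,
moving first (D-game), can win within at most `k` of his moves; `∞` if he cannot win. -/
noncomputable def gammaMB (G : SimpleGraph V) : ℕ∞ :=
  sInf (Nat.cast '' {k : ℕ | DWin G k ∅ ∅})

/-- The Maker–Breaker domination number `γ'_MB` of `G`: the least `k` such that Dominator
can win within at most `k` of his moves in the S-game (Staller moves first); `∞` if he
cannot win. -/
noncomputable def gammaMB' (G : SimpleGraph V) : ℕ∞ :=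
  sInf (Nat.cast '' {k : ℕ | DWinS G k ∅ ∅})

/-- Staller has won: she has selected all vertices of the closed neighbourhood `N[v]`
of some vertex `v`. -/
def IsStallerWin (G : SimpleGraph V) (S : Set V) : Prop :=
  ∃ v, v ∈ S ∧ ∀ u, G.Adj v u → u ∈ S

/-- Staller is to move.  `SWin G k D S` says Staller has a strategy to win using at most `k`
further moves of hers. -/
def SWin (G : SimpleGraph V) : ℕ → Set V → Set V → Prop
  | 0, _, S => IsStallerWin G S
  | (k+1), D, S => IsStallerWin G S ∨
      ∃ v ∉ D ∪ S,
        (IsStallerWin G (insert v S) ∨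
          ((∃ w, w ∉ D ∪ insert v S) ∧
            ∀ w ∉ D ∪ insert v S, SWin G k (insert w D) (insert v S)))

/-- Dominator is to move, and Staller can win within at most `k` further moves of hers. -/
def SWinD (G : SimpleGraph V) (k : ℕ) (D S : Set V) : Prop :=
  IsStallerWin G S ∨
    ((∃ w, w ∉ D ∪ S) ∧ ∀ w ∉ D ∪ S, SWin G k (insert w D) S)

/-- The Staller-Maker–Breaker domination number `γ_SMB` of `G`: the least `k` such that
Staller can win within at most `k` of her moves in the D-game (Dominator starts);
`∞` if she cannot win. -/
noncomputable def gammaSMB (G : SimpleGraph V) : ℕ∞ :=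
  sInf (Nat.cast '' {k : ℕ | SWinD G k ∅ ∅})

/-- The Staller-Maker–Breaker domination number `γ'_SMB` of `G`: the least `k` such that
Staller can win within at most `k` of her moves in the S-game (Staller starts);
`∞` if she cannot win. -/
noncomputable def gammaSMB' (G : SimpleGraph V) : ℕ∞ :=
  sInf (Nat.cast '' {k : ℕ | SWin G k ∅ ∅})

end MBD

namespace MBD

variable {V : Type*}

lemma DWin_succ' {G : SimpleGraph V} {k : ℕ} {D S : Set V} :
    DWin G (k+1) D S ↔ (IsDomSet G D ∨
      ∃ v ∉ D ∪ S,
        (IsDomSet G (insert v D) ∨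
          ((∃ w, w ∉ insert v D ∪ S) ∧
            ∀ w ∉ insert v D ∪ S, DWin G k (insert v D) (insert w S)))) := Iff.rfl

lemma gammaMB'_le' {G : SimpleGraph V} {k : ℕ} (h : DWinS G k ∅ ∅) :
    gammaMB' G ≤ (k : ℕ∞) :=
  sInf_le ⟨k, h, rfl⟩

lemma dwins_of_gammaMB'_eq {G : SimpleGraph V} {k : ℕ} (h : gammaMB' G = (k : ℕ∞)) :
    DWinS G k ∅ ∅ := by
  have hne : {m : ℕ | DWinS G m ∅ ∅}.Nonempty := by
    by_contra hemp
    rw [Set.not_nonempty_iff_eq_empty] at hemp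
    rw [gammaMB', hemp, Set.image_empty, sInf_empty] at h
    exact (ENat.coe_ne_top k) h.symm
  have hmem := Nat.sInf_mem hne
  have heq : gammaMB' G = ((sInf {m : ℕ | DWinS G m ∅ ∅} : ℕ) : ℕ∞) := by
    refine le_antisymm (sInf_le ⟨_, hmem, rfl⟩) (le_sInf ?_)
    rintro x ⟨j, hj, rfl⟩
    exact_mod_cast Nat.sInf_le hj
  rw [h] at heq
  have hk : (sInf {m : ℕ | DWinS G m ∅ ∅} : ℕ) = k := by exact_mod_cast heq.symm
  rwa [hk] at hmem

lemma notMem_pair {a b x : V} (h1 : x ≠ a) (h2 : x ≠ b) :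
    x ∉ (insert a (insert b (∅ : Set V))) := by simp [h1, h2]

lemma adj_delete {G : SimpleGraph V} {v c a b : V} (h : G.Adj a b)
    (h1 : ¬(a = v ∧ b = c)) (h2 : ¬(a = c ∧ b = v)) :
    (G.deleteEdges {s(v,c)}).Adj a b := by
  rw [SimpleGraph.deleteEdges_adj]
  refine ⟨h, ?_⟩
  simp only [Set.mem_singleton_iff, Sym2.eq_iff]
  tauto

lemma domset_transfer {G : SimpleGraph V} {v c : V}
    (hv : ∀ u, u ≠ v → G.Adj v u) {D : Set V} (hvD : v ∉ D)
    (hw : ∃ w ∈ D, w ≠ c) (h : IsDomSet G D) :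
    IsDomSet (G.deleteEdges {s(v,c)}) D := by
  intro x
  rcases h x with hx | ⟨t, ht, hadj⟩
  · exact Or.inl hx
  · have htv : t ≠ v := fun h' => hvD (h' ▸ ht)
    by_cases hvc : t = c ∧ x = v
    · obtain ⟨w, hwD, hwc⟩ := hw
      have hwv : w ≠ v := fun h' => hvD (h' ▸ hwD)
      refine Or.inr ⟨w, hwD, ?_⟩
      rw [hvc.2]
      exact adj_delete (hv w hwv).symm (fun hh => hwv hh.1) (fun hh => hwc hh.1)
    · exact Or.inr ⟨t, ht, adj_delete hadj (fun hh => htv hh.1) (fun hh => hvc ⟨hh.1, hh.2⟩)⟩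

lemma dwin2_builder {G : SimpleGraph V} {s m1 : V} (h1 : m1 ≠ s)
    (fresh : ∃ w, w ≠ m1 ∧ w ≠ s)
    (hnext : ∀ s2, s2 ≠ m1 → s2 ≠ s → ∃ m2, m2 ≠ m1 ∧ m2 ≠ s2 ∧ m2 ≠ s ∧
      IsDomSet G (insert m2 (insert m1 ∅))) :
    DWin G 2 ∅ (insert s ∅) := by
  rw [show (2:ℕ) = 1 + 1 from rfl, DWin_succ']
  right
  refine ⟨m1, by simp [h1], Or.inr ⟨?_, ?_⟩⟩
  · obtain ⟨w, hw1, hw2⟩ := fresh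
    exact ⟨w, by simp [hw1, hw2]⟩
  · intro s2 hs2
    have hs2' : s2 ≠ m1 ∧ s2 ≠ s := by
      constructor <;> intro h <;> exact hs2 (by simp [h])
    obtain ⟨m2, hm1, hm2, hm3, hdom⟩ := hnext s2 hs2'.1 hs2'.2
    rw [show (1:ℕ) = 0 + 1 from rfl, DWin_succ']
    right
    exact ⟨m2, by simp [hm1, hm2, hm3], Or.inl hdom⟩

lemma no_universal {V : Type*} (G : SimpleGraph V)
    (h2 : gammaMB' G = 2)
    (hcrit : ∀ e ∈ G.edgeSet, gammaMB' G < gammaMB' (G.deleteEdges {e}))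
    (v : V) (hv : ∀ u, u ≠ v → G.Adj v u) : False := by
  classical
  have hDW : DWinS G 2 ∅ ∅ := dwins_of_gammaMB'_eq (by exact_mod_cast h2)
  -- there is no universal vertex other than v
  have honeuniv : ∀ u, u ≠ v → ¬(∀ a, a ≠ u → G.Adj u a) := by
    intro u huv hu
    have h1 : DWinS G 1 ∅ ∅ := by
      refine Or.inr ⟨⟨v, by simp⟩, fun s _ => ?_⟩
      rw [show (1:ℕ) = 0 + 1 from rfl, DWin_succ']
      right
      by_cases hsv : s = v
      · refine ⟨u, by simp [hsv, huv], Or.inl (fun x => ?_)⟩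
        by_cases hxu : x = u
        · exact Or.inl (by simp [hxu])
        · exact Or.inr ⟨u, by simp, hu x hxu⟩
      · have hvs : v ≠ s := fun h => hsv h.symm
        refine ⟨v, by simp [hvs], Or.inl (fun x => ?_)⟩
        by_cases hxv : x = v
        · exact Or.inl (by simp [hxv])
        · exact Or.inr ⟨v, by simp, hv x hxv⟩
    have hle := gammaMB'_le' h1
    rw [h2] at hle
    norm_num at hle
  -- a singleton dominating set gives a universal vertex
  have hsingleton : ∀ d : V, d ≠ v → IsDomSet G (insert d ∅) → False := by
    intro d hd hdom
    refine honeuniv d hd (fun a ha => ?_)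
    rcases hdom a with hm | ⟨u, hu, hadj⟩
    · simp only [Set.mem_insert_iff, Set.mem_empty_iff_false, or_false] at hm
      exact absurd hm ha
    · simp only [Set.mem_insert_iff, Set.mem_empty_iff_false, or_false] at hu
      exact hu ▸ hadj
  -- extract Dominator's answer to Staller playing v
  have hDWv : DWin G 2 ∅ (insert v ∅) := by
    rcases hDW with hdom | ⟨_, hall⟩
    · rcases hdom v with h | ⟨u, hu, _⟩
      · exact absurd h (Set.notMem_empty v)
      · exact absurd hu (Set.notMem_empty u)
    · exact hall v (by simp)
  rw [show (2:ℕ) = 1 + 1 from rfl, DWin_succ'] at hDWv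
  rcases hDWv with hdom | ⟨d1, hd1mem, hnext⟩
  · rcases hdom v with h | ⟨u, hu, _⟩
    · exact absurd h (Set.notMem_empty v)
    · exact absurd hu (Set.notMem_empty u)
  have hd1v : d1 ≠ v := by
    intro h; exact hd1mem (by simp [h])
  rcases hnext with hdom1 | ⟨⟨w0, hw0mem⟩, hall⟩
  · exact hsingleton d1 hd1v hdom1
  have hw01 : w0 ≠ d1 := fun h => hw0mem (by simp [h])
  have hw02 : w0 ≠ v := fun h => hw0mem (by simp [h])
  have FACT : ∀ w, w ≠ d1 → w ≠ v → ∃ z, z ≠ d1 ∧ z ≠ v ∧ z ≠ w ∧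
      IsDomSet G (insert z (insert d1 ∅)) := by
    intro w hwd hwv
    have hw := hall w (by simp [hwd, hwv])
    rw [show (1:ℕ) = 0 + 1 from rfl, DWin_succ'] at hw
    rcases hw with hdom1 | ⟨z, hzmem, hz⟩
    · exact absurd hdom1 (fun h => hsingleton d1 hd1v h)
    · have hz1 : z ≠ d1 := fun h => hzmem (by simp [h])
      have hz2 : z ≠ w := fun h => hzmem (by simp [h])
      have hz3 : z ≠ v := fun h => hzmem (by simp [h])
      refine ⟨z, hz1, hz3, hz2, ?_⟩
      rcases hz with h | ⟨⟨w', hw'⟩, hall'⟩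
      · exact h
      · exact hall' w' hw'
  -- the contradiction machine: a winning 2-strategy for the graph with edge v-c deleted
  have contra : ∀ (c : V), c ≠ v →
      (∀ s : V, ∃ m1, m1 ≠ s ∧ (∃ w, w ≠ m1 ∧ w ≠ s) ∧
        ∀ s2, s2 ≠ m1 → s2 ≠ s → ∃ m2, m2 ≠ m1 ∧ m2 ≠ s2 ∧ m2 ≠ s ∧
          IsDomSet (G.deleteEdges {s(v,c)}) (insert m2 (insert m1 ∅))) → False := by
    intro c hcv hstrat
    have hdw : DWinS (G.deleteEdges {s(v,c)}) 2 ∅ ∅ := by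
      refine Or.inr ⟨⟨v, by simp⟩, fun s _ => ?_⟩
      obtain ⟨m1, hm1, hfresh, hnext'⟩ := hstrat s
      exact dwin2_builder hm1 hfresh hnext'
    have hlt := hcrit (s(v,c)) ((G.mem_edgeSet).mpr (hv c hcv))
    rw [h2] at hlt
    have hle := gammaMB'_le' hdw
    exact hlt.not_ge (by exact_mod_cast hle)
  by_cases hex : ∃ y, G.Adj d1 y ∧ y ≠ v
  · obtain ⟨y, hy, hyv⟩ := hex
    have hyd1 : y ≠ d1 := fun h => G.irrefl (h ▸ hy)
    by_cases hex2 : ∃ y2, G.Adj d1 y2 ∧ y2 ≠ v ∧ y2 ≠ y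
    · -- CASE 3 : d1 has two neighbours besides v; delete edge v-d1
      obtain ⟨y2, hy2, hy2v, hy2y⟩ := hex2
      have hy2d1 : y2 ≠ d1 := fun h => G.irrefl (h ▸ hy2)
      refine contra d1 hd1v ?_
      intro s
      by_cases hsv : s = v
      · refine ⟨d1, fun h => hd1v (h.trans hsv), ⟨w0, hw01, fun h => hw02 (h.trans hsv)⟩, ?_⟩
        intro s2 hs2d hs2s
        have hs2v : s2 ≠ v := fun h => hs2s (h.trans hsv.symm)
        obtain ⟨z, hz1, hz2, hz3, hzdom⟩ := FACT s2 hs2d hs2v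
        refine ⟨z, hz1, hz3, fun h => hz2 (h.trans hsv), ?_⟩
        refine domset_transfer hv (notMem_pair (Ne.symm hz2) (Ne.symm hd1v)) ?_ hzdom
        exact ⟨z, by simp, hz1⟩
      · refine ⟨v, fun h => hsv h.symm, ?_, ?_⟩
        · by_cases hsy : s = y
          · exact ⟨y2, hy2v, fun h => hy2y (h.trans hsy)⟩
          · exact ⟨y, hyv, fun h => hsy h.symm⟩
        · intro s2 hs2v hs2s
          have hchoice : ∃ t, (t = d1 ∨ G.Adj d1 t) ∧ t ≠ v ∧ t ≠ s ∧ t ≠ s2 := by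
            by_cases h1 : d1 ≠ s ∧ d1 ≠ s2
            · exact ⟨d1, Or.inl rfl, hd1v, h1.1, h1.2⟩
            · by_cases hy' : y ≠ s ∧ y ≠ s2
              · exact ⟨y, Or.inr hy, hyv, hy'.1, hy'.2⟩
              · rw [not_and_or, not_not, not_not] at h1 hy'
                have hpair : y2 ≠ s ∧ y2 ≠ s2 := by
                  rcases h1 with h1 | h1 <;> rcases hy' with h2' | h2'
                  · exact absurd (h2'.trans h1.symm) hyd1
                  · exact ⟨fun h => hy2d1 (h.trans h1.symm), fun h => hy2y (h.trans h2'.symm)⟩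
                  · exact ⟨fun h => hy2y (h.trans h2'.symm), fun h => hy2d1 (h.trans h1.symm)⟩
                  · exact absurd (h2'.trans h1.symm) hyd1
                exact ⟨y2, Or.inr hy2, hy2v, hpair.1, hpair.2⟩
          obtain ⟨t, htd, htv, hts, hts2⟩ := hchoice
          refine ⟨t, htv, hts2, hts, ?_⟩
          intro x
          by_cases hxt : x = t
          · exact Or.inl (by simp [hxt])
          by_cases hxv : x = v
          · exact Or.inl (by simp [hxv])
          by_cases hxd : x = d1
          · rcases htd with h | h
            · exact absurd (hxd.trans h.symm) hxt
            · refine Or.inr ⟨t, by simp, ?_⟩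
              rw [hxd]
              exact adj_delete h.symm (fun hh => htv hh.1) (fun hh => hd1v hh.2)
          · refine Or.inr ⟨v, by simp, ?_⟩
            exact adj_delete (hv x hxv) (fun hh => hxd hh.2) (fun hh => hd1v hh.1.symm)
    · -- CASE 2 : y is the unique neighbour of d1 besides v; delete the edge v-y
      push_neg at hex2
      have huniv_y : IsDomSet G (insert y (insert d1 ∅)) → False := by
        intro hdom
        refine honeuniv y hyv (fun a ha => ?_)
        rcases hdom a with hm | ⟨u, hu, hadj⟩
        · simp only [Set.mem_insert_iff, Set.mem_empty_iff_false, or_false] at hm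
          rcases hm with h | h
          · exact absurd h ha
          · exact h ▸ hy.symm
        · simp only [Set.mem_insert_iff, Set.mem_empty_iff_false, or_false] at hu
          rcases hu with rfl | rfl
          · exact hadj
          · by_cases hav : a = v
            · exact hav ▸ (hv y hyv).symm
            · exact absurd (hex2 a hadj hav) ha
      have hzcov : ∀ z, IsDomSet G (insert z (insert d1 ∅)) →
          ∀ x, x ≠ v → x ≠ d1 → x ≠ y → x ≠ z → G.Adj z x := by
        intro z hdom x hxv hxd hxy hxz
        rcases hdom x with hm | ⟨u, hu, hadj⟩
        · simp only [Set.mem_insert_iff, Set.mem_empty_iff_false, or_false] at hm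
          rcases hm with h | h
          · exact absurd h hxz
          · exact absurd h hxd
        · simp only [Set.mem_insert_iff, Set.mem_empty_iff_false, or_false] at hu
          rcases hu with rfl | rfl
          · exact hadj
          · by_cases hav : x = v
            · exact absurd hav hxv
            · exact absurd (hex2 x hadj hav) hxy
      refine contra y hyv ?_
      intro s
      by_cases hsv : s = v
      · refine ⟨d1, fun h => hd1v (h.trans hsv), ⟨w0, hw01, fun h => hw02 (h.trans hsv)⟩, ?_⟩
        intro s2 hs2d hs2s
        have hs2v : s2 ≠ v := fun h => hs2s (h.trans hsv.symm)
        obtain ⟨z, hz1, hz2, hz3, hzdom⟩ := FACT s2 hs2d hs2v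
        refine ⟨z, hz1, hz3, fun h => hz2 (h.trans hsv), ?_⟩
        refine domset_transfer hv (notMem_pair (Ne.symm hz2) (Ne.symm hd1v)) ?_ hzdom
        exact ⟨d1, by simp, Ne.symm hyd1⟩
      by_cases hsy : s = y
      · obtain ⟨zA, hzA1, hzA2, hzA3, hzAdom⟩ := FACT y hyd1 hyv
        refine ⟨d1, fun h => hyd1 (h.trans hsy).symm,
          ⟨v, Ne.symm hd1v, fun h => hyv (h.trans hsy).symm⟩, ?_⟩
        intro s2 hs2d hs2s
        by_cases hzs2 : zA = s2
        · have hs2v : s2 ≠ v := fun h => hzA2 (hzs2.trans h)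
          obtain ⟨zB, hzB1, hzB2, hzB3, hzBdom⟩ := FACT s2 hs2d hs2v
          by_cases hzBy : zB = y
          · exact (huniv_y (hzBy ▸ hzBdom)).elim
          · refine ⟨zB, hzB1, hzB3, fun h => hzBy (h.trans hsy), ?_⟩
            refine domset_transfer hv (notMem_pair (Ne.symm hzB2) (Ne.symm hd1v)) ?_ hzBdom
            exact ⟨d1, by simp, Ne.symm hyd1⟩
        · refine ⟨zA, hzA1, hzs2, fun h => hzA3 (h.trans hsy), ?_⟩
          refine domset_transfer hv (notMem_pair (Ne.symm hzA2) (Ne.symm hd1v)) ?_ hzAdom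
          exact ⟨d1, by simp, Ne.symm hyd1⟩
      by_cases hsd : s = d1
      · by_cases hyc : ∃ cc, G.Adj y cc ∧ cc ≠ v ∧ cc ≠ d1
        · obtain ⟨cc, hcc, hccv, hccd⟩ := hyc
          have hccy : cc ≠ y := (G.ne_of_adj hcc).symm
          refine ⟨v, fun h => hd1v (h.trans hsd).symm, ⟨y, hyv, fun h => hyd1 (h.trans hsd)⟩, ?_⟩
          intro s2 hs2v hs2s
          by_cases hs2y : s2 = y
          · refine ⟨cc, hccv, fun h => hccy (h.trans hs2y), fun h => hccd (h.trans hsd), ?_⟩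
            intro x
            by_cases hxc : x = cc
            · exact Or.inl (by simp [hxc])
            by_cases hxv : x = v
            · exact Or.inl (by simp [hxv])
            by_cases hxy : x = y
            · refine Or.inr ⟨cc, by simp, ?_⟩
              rw [hxy]
              exact adj_delete hcc.symm (fun hh => hccv hh.1) (fun hh => hccy hh.1)
            · refine Or.inr ⟨v, by simp, ?_⟩
              exact adj_delete (hv x hxv) (fun hh => hxy hh.2) (fun hh => hyv hh.1.symm)
          · refine ⟨y, hyv, fun h => hs2y h.symm, fun h => hyd1 (h.trans hsd), ?_⟩
            intro x
            by_cases hxy : x = y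
            · exact Or.inl (by simp [hxy])
            by_cases hxv : x = v
            · exact Or.inl (by simp [hxv])
            · refine Or.inr ⟨v, by simp, ?_⟩
              exact adj_delete (hv x hxv) (fun hh => hxy hh.2) (fun hh => hyv hh.1.symm)
        · refine ⟨y, fun h => hyd1 (h.trans hsd), ⟨v, Ne.symm hyv, fun h => hd1v (h.trans hsd).symm⟩, ?_⟩
          intro s2 hs2y hs2s
          by_cases hs2v : s2 = v
          · obtain ⟨zA, hzA1, hzA2, hzA3, hzAdom⟩ := FACT y hyd1 hyv
            refine ⟨zA, hzA3, fun h => hzA2 (h.trans hs2v), fun h => hzA1 (h.trans hsd), ?_⟩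
            intro x
            by_cases hxz : x = zA
            · exact Or.inl (by simp [hxz])
            by_cases hxy : x = y
            · exact Or.inl (by simp [hxy])
            by_cases hxd : x = d1
            · refine Or.inr ⟨y, by simp, ?_⟩
              rw [hxd]
              exact adj_delete hy.symm (fun hh => hyv hh.1) (fun hh => hd1v hh.2)
            by_cases hxv : x = v
            · refine Or.inr ⟨zA, by simp, ?_⟩
              rw [hxv]
              exact adj_delete (hv zA hzA2).symm (fun hh => hzA2 hh.1) (fun hh => hzA3 hh.1)
            · refine Or.inr ⟨zA, by simp, ?_⟩
              exact adj_delete (hzcov zA hzAdom x hxv hxd hxy hxz)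
                (fun hh => hzA2 hh.1) (fun hh => hzA3 hh.1)
          · refine ⟨v, Ne.symm hyv, fun h => hs2v h.symm, fun h => hd1v (h.trans hsd).symm, ?_⟩
            intro x
            by_cases hxv : x = v
            · exact Or.inl (by simp [hxv])
            by_cases hxy : x = y
            · exact Or.inl (by simp [hxy])
            · refine Or.inr ⟨v, by simp, ?_⟩
              exact adj_delete (hv x hxv) (fun hh => hxy hh.2) (fun hh => hyv hh.1.symm)
      · -- s is none of v, y, d1
        refine ⟨v, fun h => hsv h.symm, ⟨y, hyv, fun h => hsy h.symm⟩, ?_⟩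
        intro s2 hs2v hs2s
        by_cases hs2y : s2 = y
        · refine ⟨d1, hd1v, fun h => hyd1 (h.trans hs2y).symm, fun h => hsd h.symm, ?_⟩
          intro x
          by_cases hxd : x = d1
          · exact Or.inl (by simp [hxd])
          by_cases hxv : x = v
          · exact Or.inl (by simp [hxv])
          by_cases hxy : x = y
          · refine Or.inr ⟨d1, by simp, ?_⟩
            rw [hxy]
            exact adj_delete hy (fun hh => hd1v hh.1) (fun hh => hyd1 hh.1.symm)
          · refine Or.inr ⟨v, by simp, ?_⟩
            exact adj_delete (hv x hxv) (fun hh => hxy hh.2) (fun hh => hyv hh.1.symm)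
        · refine ⟨y, hyv, fun h => hs2y h.symm, fun h => hsy h.symm, ?_⟩
          intro x
          by_cases hxy : x = y
          · exact Or.inl (by simp [hxy])
          by_cases hxv : x = v
          · exact Or.inl (by simp [hxv])
          · refine Or.inr ⟨v, by simp, ?_⟩
            exact adj_delete (hv x hxv) (fun hh => hxy hh.2) (fun hh => hyv hh.1.symm)
  · -- CASE 1 : v is the only neighbour of d1; delete the edge v-z0
    push_neg at hex
    obtain ⟨z0, hz01, hz02, hz03, hz0dom⟩ := FACT w0 hw01 hw02
    have hzcov : ∀ z, IsDomSet G (insert z (insert d1 ∅)) →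
        ∀ x, x ≠ v → x ≠ d1 → x ≠ z → G.Adj z x := by
      intro z hdom x hxv hxd hxz
      rcases hdom x with hm | ⟨u, hu, hadj⟩
      · simp only [Set.mem_insert_iff, Set.mem_empty_iff_false, or_false] at hm
        rcases hm with h | h
        · exact absurd h hxz
        · exact absurd h hxd
      · simp only [Set.mem_insert_iff, Set.mem_empty_iff_false, or_false] at hu
        rcases hu with rfl | rfl
        · exact hadj
        · exact absurd (hex x hadj) hxv
    refine contra z0 hz02 ?_
    intro s
    by_cases hsv : s = v
    · refine ⟨d1, fun h => hd1v (h.trans hsv), ⟨w0, hw01, fun h => hw02 (h.trans hsv)⟩, ?_⟩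
      intro s2 hs2d hs2s
      have hs2v : s2 ≠ v := fun h => hs2s (h.trans hsv.symm)
      obtain ⟨z, hz1, hz2, hz3, hzdom⟩ := FACT s2 hs2d hs2v
      refine ⟨z, hz1, hz3, fun h => hz2 (h.trans hsv), ?_⟩
      refine domset_transfer hv (notMem_pair (Ne.symm hz2) (Ne.symm hd1v)) ?_ hzdom
      exact ⟨d1, by simp, Ne.symm hz01⟩
    by_cases hsd : s = d1
    · refine ⟨v, fun h => hd1v (h.trans hsd).symm, ⟨w0, hw02, fun h => hw01 (h.trans hsd)⟩, ?_⟩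
      intro s2 hs2v hs2s
      by_cases hs2z : s2 = z0
      · refine ⟨w0, hw02, fun h => hz03 (h.trans hs2z).symm, fun h => hw01 (h.trans hsd), ?_⟩
        intro x
        by_cases hxw : x = w0
        · exact Or.inl (by simp [hxw])
        by_cases hxv : x = v
        · exact Or.inl (by simp [hxv])
        by_cases hxz : x = z0
        · refine Or.inr ⟨w0, by simp, ?_⟩
          rw [hxz]
          exact adj_delete (hzcov z0 hz0dom w0 hw02 hw01 (Ne.symm hz03)).symm
            (fun hh => hw02 hh.1) (fun hh => hz03 hh.1.symm)
        · refine Or.inr ⟨v, by simp, ?_⟩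
          exact adj_delete (hv x hxv) (fun hh => hxz hh.2) (fun hh => hz02 hh.1.symm)
      · refine ⟨z0, hz02, fun h => hs2z h.symm, fun h => hz01 (h.trans hsd), ?_⟩
        intro x
        by_cases hxz : x = z0
        · exact Or.inl (by simp [hxz])
        by_cases hxv : x = v
        · exact Or.inl (by simp [hxv])
        · refine Or.inr ⟨v, by simp, ?_⟩
          exact adj_delete (hv x hxv) (fun hh => hxz hh.2) (fun hh => hz02 hh.1.symm)
    by_cases hsz : s = z0
    · obtain ⟨z1, hz11, hz12, hz13, hz1dom⟩ := FACT z0 hz01 hz02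
      refine ⟨z1, fun h => hz13 (h.trans hsz), ⟨v, Ne.symm hz12, fun h => hz02 (h.trans hsz).symm⟩, ?_⟩
      intro s2 hs2z1 hs2s
      by_cases hs2d : s2 = d1
      · refine ⟨v, Ne.symm hz12, fun h => hd1v (h.trans hs2d).symm, fun h => hz02 (h.trans hsz).symm, ?_⟩
        intro x
        by_cases hxv : x = v
        · exact Or.inl (by simp [hxv])
        by_cases hxz1 : x = z1
        · exact Or.inl (by simp [hxz1])
        by_cases hxz : x = z0
        · refine Or.inr ⟨z1, by simp, ?_⟩
          rw [hxz]
          exact adj_delete (hzcov z1 hz1dom z0 hz02 hz01 (fun h => hz13 h.symm))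
            (fun hh => hz12 hh.1) (fun hh => hz13 hh.1)
        · refine Or.inr ⟨v, by simp, ?_⟩
          exact adj_delete (hv x hxv) (fun hh => hxz hh.2) (fun hh => hz02 hh.1.symm)
      · refine ⟨d1, Ne.symm hz11, fun h => hs2d h.symm, fun h => hz01 (h.trans hsz).symm, ?_⟩
        refine domset_transfer hv (notMem_pair (Ne.symm hd1v) (Ne.symm hz12))
          ⟨d1, by simp, Ne.symm hz01⟩ ?_
        rw [Set.insert_comm]
        exact hz1dom
    · -- s is none of v, d1, z0
      refine ⟨z0, fun h => hsz h.symm, ⟨v, Ne.symm hz02, fun h => hsv h.symm⟩, ?_⟩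
      intro s2 hs2z hs2s
      by_cases hs2v : s2 = v
      · refine ⟨d1, Ne.symm hz01, fun h => hd1v (h.trans hs2v), fun h => hsd h.symm, ?_⟩
        refine domset_transfer hv (notMem_pair (Ne.symm hd1v) (Ne.symm hz02))
          ⟨d1, by simp, Ne.symm hz01⟩ ?_
        rw [Set.insert_comm]
        exact hz0dom
      · refine ⟨v, Ne.symm hz02, fun h => hs2v h.symm, fun h => hsv h.symm, ?_⟩
        intro x
        by_cases hxv : x = v
        · exact Or.inl (by simp [hxv])
        by_cases hxz : x = z0
        · exact Or.inl (by simp [hxz])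
        · refine Or.inr ⟨v, by simp, ?_⟩
          exact adj_delete (hv x hxv) (fun hh => hxz hh.2) (fun hh => hz02 hh.1.symm)

end MBD


open MBD

/-- If `G` is a connected `2`-`γ'_MB`-critical graph on `n` vertices, then the maximum degree
of `G` is at most `n - 2`; in particular no vertex of `G` is adjacent to all other vertices. -/
theorem two_gammaMB'_critical_maxDegree {V : Type*} [Fintype V]
    (G : SimpleGraph V) [DecidableRel G.Adj] (hG : G.Connected)
    (h2 : gammaMB' G = 2)
    (hcrit : ∀ e ∈ G.edgeSet, gammaMB' G < gammaMB' (G.deleteEdges {e})) :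
    G.maxDegree ≤ Fintype.card V - 2 ∧ ∀ v : V, ∃ u : V, u ≠ v ∧ ¬ G.Adj v u := by
  classical
  have key : ∀ v : V, ∃ u : V, u ≠ v ∧ ¬ G.Adj v u := by
    intro v
    by_contra hcon
    push_neg at hcon
    exact MBD.no_universal G h2 hcrit v hcon
  refine ⟨?_, key⟩
  refine SimpleGraph.maxDegree_le_of_forall_degree_le G _ (fun w => ?_)
  obtain ⟨u, huw, hnadj⟩ := key w
  have hsub : G.neighborFinset w ⊆ (Finset.univ \ {w, u}) := by
    intro x hx
    rw [SimpleGraph.mem_neighborFinset] at hx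
    simp only [Finset.mem_sdiff, Finset.mem_univ, true_and, Finset.mem_insert,
      Finset.mem_singleton]
    push_neg
    exact ⟨fun h => G.irrefl (h ▸ hx), fun h => hnadj (h ▸ hx)⟩
  calc G.degree w ≤ (Finset.univ \ {w, u}).card := Finset.card_le_card hsub
    _ = Fintype.card V - 2 := by
        rw [Finset.card_sdiff_of_subset (Finset.subset_univ _), Finset.card_univ]
        congr 1
        rw [Finset.card_insert_of_notMem (by simp [Ne.symm huw]), Finset.card_singleton]
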